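/- arXiv:0806.0697 — 6 statements merged into one kernel-verified Lean document; each statement's English description precedes it below -/
import Mathlib

section
/- Let M be a finitely generated module over O/ϖ^m O. Then M is a free O/ϖ^m O-module if and only if for every x ∈ M with ϖ·x = 0 there exists y ∈ M such that x = ϖ^{m−1}·y. -/
open scoped TensorProduct

/-!
`R = O/ϖ^m` is a local ring whose maximal ideal is generated by `π = ϖ mod ϖ^m`, and the
annihilator of `π` is `π^(m-1) R`. Over a free module the annihilator condition passes
coordinatewise to `M`. Conversely, every element of `𝔪 ⊗ M` has the form `π ⊗ x`; if it maps
to `π • x = 0` then `x = π^(m-1) • y`, so `π ⊗ x = π^m ⊗ y = 0`. Hence `𝔪 ⊗ M → M` is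
injective, which forces a finitely presented module over a local ring to be free.
-/

section General

variable {R : Type*} [CommRing R] {M : Type*} [AddCommGroup M] [Module R M]

theorem Module.Free.exists_eq_smul_of_smul_eq_zero [Module.Free R M] {a b : R}
    (hab : ∀ r : R, a * r = 0 → ∃ c, r = b * c) {x : M} (hx : a • x = 0) :
    ∃ y : M, x = b • y := by
  let e := Module.Free.chooseBasis R M
  have hcoord : ∀ i, a * e.repr x i = 0 := fun i => by
    simpa using congrArg (e.repr · i) hx
  suffices x ∈ LinearMap.range (LinearMap.lsmul R M b) by
    obtain ⟨y, hy⟩ := this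
    exact ⟨y, hy.symm⟩
  rw [← e.linearCombination_repr x, Finsupp.linearCombination_apply, Finsupp.sum]
  refine Submodule.sum_mem _ fun i _ => ?_
  obtain ⟨c, hc⟩ := hab _ (hcoord i)
  exact ⟨c • e i, by rw [LinearMap.lsmul_apply, smul_smul, ← hc]⟩

theorem Ideal.exists_eq_tmul_of_le_span_singleton {I : Ideal R} {π : R} (hπI : π ∈ I)
    (hIπ : I ≤ Ideal.span {π}) (t : I ⊗[R] M) : ∃ x : M, t = (⟨π, hπI⟩ : I) ⊗ₜ[R] x := by
  induction t using TensorProduct.induction_on with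
  | zero => exact ⟨0, (TensorProduct.tmul_zero _ _).symm⟩
  | tmul i x =>
    obtain ⟨s, hs⟩ := Ideal.mem_span_singleton'.mp (hIπ i.2)
    refine ⟨s • x, ?_⟩
    rw [← TensorProduct.smul_tmul]
    congr 1
    exact Subtype.ext (by simp [hs])
  | add t₁ t₂ h₁ h₂ =>
    obtain ⟨x₁, rfl⟩ := h₁
    obtain ⟨x₂, rfl⟩ := h₂
    exact ⟨x₁ + x₂, (TensorProduct.tmul_add _ _ _).symm⟩

theorem Module.free_of_maximalIdeal_eq_span_singleton [IsLocalRing R]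
    [Module.FinitePresentation R M] {π c : R}
    (hπ : IsLocalRing.maximalIdeal R = Ideal.span {π}) (hcπ : c * π = 0)
    (h : ∀ x : M, π • x = 0 → ∃ y : M, x = c • y) : Module.Free R M := by
  have hπmem : π ∈ IsLocalRing.maximalIdeal R := hπ ▸ Ideal.mem_span_singleton_self π
  refine Module.free_of_maximalIdeal_rTensor_injective ?_
  rw [← LinearMap.ker_eq_bot, LinearMap.ker_eq_bot']
  intro t ht
  obtain ⟨x, rfl⟩ := Ideal.exists_eq_tmul_of_le_span_singleton hπmem hπ.le t
  have hx : π • x = 0 := by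
    simpa using congrArg (TensorProduct.lid R M) ht
  obtain ⟨y, rfl⟩ := h x hx
  have hcπ' : c • (⟨π, hπmem⟩ : IsLocalRing.maximalIdeal R) = 0 := Subtype.ext hcπ
  rw [← TensorProduct.smul_tmul, hcπ', TensorProduct.zero_tmul]

end General

section Quotient

variable {O : Type*} [CommRing O] [IsDomain O]

theorem Ideal.Quotient.exists_eq_pow_mul_of_mul_eq_zero {ϖ : O} (hϖ : ϖ ≠ 0) {n : ℕ}
    (r : O ⧸ Ideal.span {ϖ ^ (n + 1)})
    (hr : Ideal.Quotient.mk (Ideal.span {ϖ ^ (n + 1)}) ϖ * r = 0) :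
    ∃ c, r = Ideal.Quotient.mk (Ideal.span {ϖ ^ (n + 1)}) ϖ ^ n * c := by
  obtain ⟨r, rfl⟩ := Ideal.Quotient.mk_surjective r
  rw [← map_mul, Ideal.Quotient.eq_zero_iff_mem, Ideal.mem_span_singleton] at hr
  obtain ⟨c, hc⟩ := hr
  refine ⟨Ideal.Quotient.mk _ c, ?_⟩
  rw [mul_left_cancel₀ hϖ (hc.trans (by ring) : ϖ * r = ϖ * (ϖ ^ n * c)), map_mul, map_pow]

variable [IsDiscreteValuationRing O] {ϖ : O}

theorem Irreducible.isLocalRing_quotient_span_pow (hϖ : Irreducible ϖ) (n : ℕ) :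
    IsLocalRing (O ⧸ Ideal.span {ϖ ^ (n + 1)}) := by
  have : Nontrivial (O ⧸ Ideal.span {ϖ ^ (n + 1)}) := by
    refine Ideal.Quotient.nontrivial_iff.mpr fun htop => hϖ.not_isUnit ?_
    rw [Ideal.span_singleton_eq_top] at htop
    exact isUnit_of_dvd_unit (dvd_pow_self ϖ n.succ_ne_zero) htop
  exact .of_surjective' _ Ideal.Quotient.mk_surjective

theorem Irreducible.maximalIdeal_quotient_span_pow (hϖ : Irreducible ϖ) (n : ℕ) :
    letI := hϖ.isLocalRing_quotient_span_pow n
    IsLocalRing.maximalIdeal (O ⧸ Ideal.span {ϖ ^ (n + 1)}) =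
      Ideal.span {Ideal.Quotient.mk (Ideal.span {ϖ ^ (n + 1)}) ϖ} := by
  have := hϖ.isLocalRing_quotient_span_pow n
  rw [← IsLocalRing.map_maximalIdeal_of_surjective _ Ideal.Quotient.mk_surjective,
    hϖ.maximalIdeal_eq, Ideal.map_span, Set.image_singleton]

end Quotient

theorem stmt0 {O : Type*} [CommRing O] [IsDomain O] [IsDiscreteValuationRing O]
    (ϖ : O) (hϖ : Irreducible ϖ) (m : ℕ) (hm : 1 ≤ m)
    (M : Type*) [AddCommGroup M] [Module (O ⧸ Ideal.span {ϖ ^ m}) M]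
    [Module.Finite (O ⧸ Ideal.span {ϖ ^ m}) M] :
    Module.Free (O ⧸ Ideal.span {ϖ ^ m}) M ↔
      ∀ x : M, (Ideal.Quotient.mk (Ideal.span {ϖ ^ m}) ϖ) • x = 0 →
        ∃ y : M, x = (Ideal.Quotient.mk (Ideal.span {ϖ ^ m}) ϖ) ^ (m - 1) • y := by
  obtain ⟨n, rfl⟩ : ∃ n, m = n + 1 := ⟨m - 1, by omega⟩
  rw [Nat.add_sub_cancel]
  have := hϖ.isLocalRing_quotient_span_pow n
  have := Module.finitePresentation_of_finite (O ⧸ Ideal.span {ϖ ^ (n + 1)}) M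
  refine ⟨fun _ x hx => Module.Free.exists_eq_smul_of_smul_eq_zero
    (Ideal.Quotient.exists_eq_pow_mul_of_mul_eq_zero hϖ.ne_zero) hx, fun h => ?_⟩
  refine Module.free_of_maximalIdeal_eq_span_singleton
    (hϖ.maximalIdeal_quotient_span_pow n) ?_ h
  rw [← pow_succ, ← map_pow, Ideal.Quotient.mk_singleton_self]
end

section
/- Let M be an O-module, d ≥ 1 and m ≥ 1 integers, and φ : (O/ϖ^m O)^d → M an O-linear map. Assume that for every a ∈ (O/ϖ^m O)^d with ϖ·φ(a) = 0 there exists b ∈ (O/ϖ^m O)^d such that φ(a) = ϖ^{m−1}·φ(b). Then the image of φ is a free O/ϖ^m O-module and the kernel of φ is a direct summand of the O/ϖ^m O-module (O/ϖ^m O)^d. -/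
/-!
The image `N` of `φ` is a finitely generated `O`-module killed by `ϖ ^ m`, so by the structure
theorem it is a finite product of cyclic modules `O ⧸ (ϖ ^ e)` with `e ≤ m`. The hypothesis passes
to each factor, and in `O ⧸ (ϖ ^ e)` with `0 < e < m` the element `ϖ ^ (e - 1)` is killed by `ϖ`
without being a multiple of `ϖ ^ (m - 1)`; hence every `e` is `0` or `m`, and `N` is free over
`O ⧸ (ϖ ^ m)`. As `(O ⧸ (ϖ ^ m))^d` is killed by `ϖ ^ m`, a basis of `N` lifts along `φ` to an
`O`-linear section of `φ` onto `N`, so the kernel of `φ` is a direct summand.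
-/

open LinearMap

def LinearEquiv.piSubtypeOfSubsingleton {R ι : Type*} [Semiring R] {M : ι → Type*}
    [∀ i, AddCommMonoid (M i)] [∀ i, Module R (M i)] (p : ι → Prop) [DecidablePred p]
    (h : ∀ i, ¬p i → Subsingleton (M i)) : (∀ i, M i) ≃ₗ[R] ∀ i : Subtype p, M i where
  toFun x i := x i
  invFun y i := if hi : p i then y ⟨i, hi⟩ else 0
  map_add' _ _ := rfl
  map_smul' _ _ := rfl
  left_inv x := funext fun i => by
    by_cases hi : p i
    · simp [hi]
    · exact (h i hi).elim _ _
  right_inv y := funext fun i => by simp [i.2]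

theorem exists_eq_smul_of_smul_eq_zero_of_retract {R A B : Type*} [Semiring R]
    [AddCommMonoid A] [Module R A] [AddCommMonoid B] [Module R B]
    (i : A →ₗ[R] B) (r : B →ₗ[R] A) (hri : ∀ x, r (i x) = x) {c a : R}
    (h : ∀ x : B, c • x = 0 → ∃ y, x = a • y) (x : A) (hx : c • x = 0) : ∃ y, x = a • y :=
  let ⟨y, hy⟩ := h (i x) (by rw [← map_smul, hx, map_zero])
  ⟨r y, by rw [← map_smul, ← hy, hri]⟩

theorem exists_isCompl_ker_of_comp_eq_id {R P N : Type*} [Ring R] [AddCommGroup P] [Module R P]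
    [AddCommGroup N] [Module R N] {f : P →ₗ[R] N} {s : N →ₗ[R] P} (hfs : f ∘ₗ s = LinearMap.id) :
    ∃ C : Submodule R P, IsCompl (ker f) C := by
  have hidem : IsIdempotentElem (s ∘ₗ f) := by
    rw [IsIdempotentElem, Module.End.mul_eq_comp, comp_assoc, ← comp_assoc f, hfs, id_comp]
  have hker : ker (s ∘ₗ f) = ker f := ker_comp_of_ker_eq_bot f (ker_eq_bot_of_inverse hfs)
  exact ⟨range (s ∘ₗ f), hker ▸ hidem.isCompl.symm⟩

section CommRing

variable {O : Type*} [CommRing O]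

theorem exists_linearMap_comp_eq_of_surjective {ι P N : Type*} [Fintype ι] {I : Ideal O}
    [AddCommGroup P] [Module O P] [AddCommGroup N] [Module O N]
    {f : P →ₗ[O] N} (hf : Function.Surjective f) (hP : ∀ a ∈ I, ∀ x : P, a • x = 0)
    (g : (ι → O ⧸ I) →ₗ[O] N) : ∃ h : (ι → O ⧸ I) →ₗ[O] P, f ∘ₗ h = g := by
  classical
  choose c hc using fun j => hf (g (Pi.single j 1))
  let h j : O ⧸ I →ₗ[O] P := I.liftQ (toSpanSingleton O P (c j)) fun a ha => hP a ha (c j)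
  refine ⟨lsum O (fun _ => O ⧸ I) O h, pi_ext' fun j => Submodule.linearMap_qext _ ?_⟩
  refine ext_ring ?_
  simp only [comp_apply, coe_single, lsum_piSingle]
  exact (congrArg f (one_smul O (c j))).trans (hc j)

theorem exists_linearEquiv_pi_quotient_span_pow (x : O) {ι : Type*} [Fintype ι] {e : ι → ℕ}
    {m : ℕ} (he : ∀ i, e i = 0 ∨ e i = m) :
    ∃ n, Nonempty ((∀ i, O ⧸ Ideal.span {x ^ e i}) ≃ₗ[O] (Fin n → O ⧸ Ideal.span {x ^ m})) := by
  classical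
  have hsub (i : ι) (hi : ¬e i = m) : Subsingleton (O ⧸ Ideal.span {x ^ e i}) :=
    Ideal.Quotient.subsingleton_iff.2 <| by
      rw [(he i).resolve_right hi, pow_zero, Ideal.span_singleton_one]
  exact ⟨_, ⟨LinearEquiv.piSubtypeOfSubsingleton _ hsub ≪≫ₗ
    LinearEquiv.piCongrRight (fun i => Submodule.quotEquivOfEq _ _ (by rw [i.2])) ≪≫ₗ
    LinearEquiv.piCongrLeft' O _ (Fintype.equivFin _)⟩⟩

end CommRing

section Domain

variable {O : Type*} [CommRing O] [IsDomain O] {ϖ : O}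

theorem Ideal.Quotient.mk_span_pow_eq_zero_iff (hϖ : Irreducible ϖ) {e k : ℕ} :
    Ideal.Quotient.mk (Ideal.span {ϖ ^ e}) (ϖ ^ k) = 0 ↔ e ≤ k := by
  rw [Ideal.Quotient.eq_zero_iff_mem, Ideal.mem_span_singleton,
    pow_dvd_pow_iff hϖ.ne_zero hϖ.not_isUnit]

theorem lt_of_forall_smul_eq_zero_exists_eq_pow_smul (hϖ : Irreducible ϖ) {e k : ℕ} (he : e ≠ 0)
    (h : ∀ x : O ⧸ Ideal.span {ϖ ^ e}, ϖ • x = 0 → ∃ y, x = ϖ ^ k • y) : k < e := by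
  by_contra! hk
  obtain ⟨y, hy⟩ := h (Ideal.Quotient.mk _ (ϖ ^ (e - 1))) <| by
    rw [Algebra.smul_def, Ideal.Quotient.algebraMap_eq, ← map_mul, ← pow_succ',
      Nat.sub_add_cancel (Nat.one_le_iff_ne_zero.2 he), Ideal.Quotient.mk_span_pow_eq_zero_iff hϖ]
  have hy0 : ϖ ^ k • y = 0 := by
    rw [Algebra.smul_def, Ideal.Quotient.algebraMap_eq,
      (Ideal.Quotient.mk_span_pow_eq_zero_iff hϖ).2 hk, zero_mul]
  have := (Ideal.Quotient.mk_span_pow_eq_zero_iff hϖ).1 (hy.trans hy0)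
  omega

theorem exists_linearEquiv_pi_quotient_span_pow_of_smul_eq_zero [IsDiscreteValuationRing O]
    (hϖ : Irreducible ϖ) {m : ℕ} {N : Type*} [AddCommGroup N] [Module O N] [Module.Finite O N]
    (hkill : ∀ x : N, ϖ ^ m • x = 0) (h : ∀ x : N, ϖ • x = 0 → ∃ y, x = ϖ ^ (m - 1) • y) :
    ∃ n, Nonempty (N ≃ₗ[O] (Fin n → O ⧸ Ideal.span {ϖ ^ m})) := by
  classical
  have htors : Module.IsTorsion O N := fun x =>
    ⟨⟨ϖ ^ m, mem_nonZeroDivisors_of_ne_zero (pow_ne_zero _ hϖ.ne_zero)⟩, hkill x⟩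
  obtain ⟨ι, _, p, hp, e, ⟨f⟩⟩ := Module.equiv_directSum_of_isTorsion htors
  have hspan (i : ι) : Ideal.span {p i ^ e i} = Ideal.span {ϖ ^ e i} :=
    Ideal.span_singleton_eq_span_singleton.2
      (IsDiscreteValuationRing.associated_of_irreducible O hϖ (hp i)).pow_pow.symm
  let g : N ≃ₗ[O] ∀ i, O ⧸ Ideal.span {ϖ ^ e i} :=
    f ≪≫ₗ DirectSum.linearEquivFunOnFintype O ι _ ≪≫ₗ
      LinearEquiv.piCongrRight fun i => Submodule.quotEquivOfEq _ _ (hspan i)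
  have he (i : ι) : e i = 0 ∨ e i = m := by
    let incl := g.symm.toLinearMap ∘ₗ single O _ i
    let proj := (proj i : _ →ₗ[O] _) ∘ₗ g.toLinearMap
    have hproj (x) : proj (incl x) = x := by simp [incl, proj]
    have hle : e i ≤ m := by
      have h1 : ϖ ^ m • (1 : O ⧸ Ideal.span {ϖ ^ e i}) = 0 := by
        rw [← hproj 1, ← map_smul, hkill, map_zero]
      rwa [Algebra.smul_def, mul_one, Ideal.Quotient.algebraMap_eq,
        Ideal.Quotient.mk_span_pow_eq_zero_iff hϖ] at h1
    have hlt (he0 : e i ≠ 0) : m - 1 < e i := lt_of_forall_smul_eq_zero_exists_eq_pow_smul hϖ he0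
      (exists_eq_smul_of_smul_eq_zero_of_retract incl proj hproj h)
    omega
  obtain ⟨n, ⟨E⟩⟩ := exists_linearEquiv_pi_quotient_span_pow ϖ he
  exact ⟨n, ⟨g ≪≫ₗ E⟩⟩

end Domain

theorem stmt2_general {O : Type*} [CommRing O] [IsDomain O] [IsDiscreteValuationRing O]
    (ϖ : O) (hϖ : Irreducible ϖ) (d m : ℕ)
    (M : Type*) [AddCommGroup M] [Module O M]
    (φ : (Fin d → O ⧸ Ideal.span {ϖ ^ m}) →ₗ[O] M)
    (h : ∀ a : Fin d → O ⧸ Ideal.span {ϖ ^ m},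
      ϖ • φ a = 0 → ∃ b : Fin d → O ⧸ Ideal.span {ϖ ^ m}, φ a = ϖ ^ (m - 1) • φ b) :
    -- the image of `φ` is a free `O/ϖ^m O`-module
    (∃ n : ℕ, Nonempty ((LinearMap.range φ) ≃ₗ[O] (Fin n → O ⧸ Ideal.span {ϖ ^ m}))) ∧
    -- the kernel of `φ` is a direct summand of the `O/ϖ^m O`-module `(O/ϖ^m O)^d`
    (∃ C : Submodule O (Fin d → O ⧸ Ideal.span {ϖ ^ m}), IsCompl (LinearMap.ker φ) C) := by
  have hP : ∀ a ∈ Ideal.span {ϖ ^ m}, ∀ x : Fin d → O ⧸ Ideal.span {ϖ ^ m}, a • x = 0 :=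
    fun a ha x => funext fun i => by
      rw [Pi.smul_apply, Algebra.smul_def, Ideal.Quotient.algebraMap_eq,
        Ideal.Quotient.eq_zero_iff_mem.2 ha, zero_mul, Pi.zero_apply]
  have hkill (y : range φ) : ϖ ^ m • y = 0 := by
    obtain ⟨_, a, rfl⟩ := y
    exact Subtype.ext <| by
      rw [Submodule.coe_smul, Submodule.coe_zero, ← map_smul,
        hP _ (Ideal.mem_span_singleton_self _), map_zero]
  have hsocle (y : range φ) (hy : ϖ • y = 0) : ∃ z, y = ϖ ^ (m - 1) • z := by
    obtain ⟨_, a, rfl⟩ := y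
    obtain ⟨b, hb⟩ := h a (congrArg Subtype.val hy)
    exact ⟨⟨φ b, b, rfl⟩, Subtype.ext hb⟩
  obtain ⟨n, ⟨G⟩⟩ := exists_linearEquiv_pi_quotient_span_pow_of_smul_eq_zero hϖ hkill hsocle
  obtain ⟨s, hs⟩ := exists_linearMap_comp_eq_of_surjective φ.surjective_rangeRestrict hP
    G.symm.toLinearMap
  refine ⟨⟨n, ⟨G⟩⟩, ?_⟩
  rw [← ker_rangeRestrict]
  exact exists_isCompl_ker_of_comp_eq_id (s := s ∘ₗ G.toLinearMap) <| by
    rw [← comp_assoc, hs, LinearEquiv.symm_comp]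

theorem stmt2 {O : Type*} [CommRing O] [IsDomain O] [IsDiscreteValuationRing O]
    (ϖ : O) (hϖ : Irreducible ϖ) (d m : ℕ) (hd : 1 ≤ d) (hm : 1 ≤ m)
    (M : Type*) [AddCommGroup M] [Module O M]
    (φ : (Fin d → O ⧸ Ideal.span {ϖ ^ m}) →ₗ[O] M)
    (h : ∀ a : Fin d → O ⧸ Ideal.span {ϖ ^ m},
      ϖ • φ a = 0 → ∃ b : Fin d → O ⧸ Ideal.span {ϖ ^ m}, φ a = ϖ ^ (m - 1) • φ b) :
    -- the image of `φ` is a free `O/ϖ^m O`-module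
    (∃ n : ℕ, Nonempty ((LinearMap.range φ) ≃ₗ[O] (Fin n → O ⧸ Ideal.span {ϖ ^ m}))) ∧
    -- the kernel of `φ` is a direct summand of the `O/ϖ^m O`-module `(O/ϖ^m O)^d`
    (∃ C : Submodule O (Fin d → O ⧸ Ideal.span {ϖ ^ m}), IsCompl (LinearMap.ker φ) C) :=
  stmt2_general ϖ hϖ d m M φ h
end

section
/- Let g ∈ GL_d(O) be such that the automorphism of (O/ϖ^m O)^d induced by g (reducing entries modulo ϖ^m) maps J^0_{m,h} onto itself. Then g = k·p for some k ∈ K_m and p ∈ P_h(O). Consequently, the stabilizer of J^0_{m,h} in GL_d(O) equals K_m·P_h(O). -/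
/-!
Over any commutative ring, an invertible matrix maps the span of the first `h` standard basis
vectors onto itself exactly when its lower-left block vanishes: the inclusion `M T ≤ T` is
block-triangularity, and block-triangularity passes to `M⁻¹`, giving `T ≤ M T`. So `g` stabilises
`J⁰_{m,h}` iff its lower-left block vanishes modulo `ϖ^m`. Zeroing that block yields `p ≡ g`
mod `ϖ^m`; `det p ≡ det g` is still a unit since `ϖ^m` lies in the maximal ideal, and
`k := g p⁻¹` lies in `K_m`.
-/

open Matrix Submodule

theorem Prop.lt_iff_not_and {p q : Prop} : p < q ↔ ¬p ∧ q := by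
  simp only [lt_iff_le_not_ge, le_Prop_eq]
  tauto

namespace Matrix

theorem mem_span_basisFun_image_iff {n R : Type*} [Finite n] [Semiring R] {s : Set n} {v : n → R} :
    v ∈ span R (Pi.basisFun R n '' s) ↔ ∀ i ∉ s, v i = 0 := by
  rw [Module.Basis.mem_span_image]
  simp [Set.subset_def, not_imp_comm]

variable {n R : Type*} [Fintype n] [DecidableEq n] [CommRing R]

theorem map_mulVecLin_span_le_iff_blockTriangular (M : Matrix n n R) (b : n → Prop) :
    (span R (Pi.basisFun R n '' {i | ¬b i})).map M.mulVecLin ≤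
        span R (Pi.basisFun R n '' {i | ¬b i}) ↔ M.BlockTriangular b := by
  rw [map_span_le, Set.forall_mem_image]
  simp only [mem_span_basisFun_image_iff]
  simp only [Set.mem_ofPred_eq, not_not, Pi.basisFun_apply, mulVecLin_apply, mulVec_single_one,
    col_apply, BlockTriangular, Prop.lt_iff_not_and]
  exact ⟨fun H i j hij => H hij.1 i hij.2, fun H j hj i hi => H ⟨hj, hi⟩⟩

theorem map_mulVecLin_span_eq_iff_blockTriangular {M : Matrix n n R} (hM : IsUnit M)
    (b : n → Prop) :
    (span R (Pi.basisFun R n '' {i | ¬b i})).map M.mulVecLin =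
        span R (Pi.basisFun R n '' {i | ¬b i}) ↔ M.BlockTriangular b := by
  set T := span R (Pi.basisFun R n '' {i | ¬b i})
  refine ⟨fun h => (map_mulVecLin_span_le_iff_blockTriangular M b).1 h.le, fun hb => ?_⟩
  have : Invertible M := hM.invertible
  have hinv : T.map M⁻¹.mulVecLin ≤ T :=
    (map_mulVecLin_span_le_iff_blockTriangular _ b).2 (blockTriangular_inv_of_blockTriangular hb)
  refine ((map_mulVecLin_span_le_iff_blockTriangular M b).2 hb).antisymm ?_
  calc T = T.map (M * M⁻¹).mulVecLin := by simp [mul_inv_of_invertible]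
    _ = (T.map M⁻¹.mulVecLin).map M.mulVecLin := by rw [mulVecLin_mul, map_comp]
    _ ≤ T.map M.mulVecLin := map_mono hinv

theorem range_single_castLE_eq_basisFun_image {d h : ℕ} (hh : h ≤ d) :
    Set.range (fun i : Fin h => (Pi.single (Fin.castLE hh i) 1 : Fin d → R)) =
      Pi.basisFun R (Fin d) '' {i | ¬h ≤ (i : ℕ)} := by
  simp only [not_le, ← Fin.range_castLE hh, ← Set.range_comp, Function.comp_def, Pi.basisFun_apply]

theorem blockTriangular_le_val_iff {d h : ℕ} {M : Matrix (Fin d) (Fin d) R} :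
    M.BlockTriangular (fun i => h ≤ (i : ℕ)) ↔
      ∀ i j : Fin d, h ≤ (i : ℕ) → (j : ℕ) < h → M i j = 0 := by
  simp only [BlockTriangular, Prop.lt_iff_not_and, not_le]
  exact ⟨fun H i j hi hj => H ⟨hj, hi⟩, fun H i j hij => H i j hij.2 hij.1⟩

namespace GeneralLinearGroup

theorem exists_mem_ker_map_mul_blockTriangular {α : Type*} [LT α] {b : n → α} {I : Ideal R}
    (hI : I ≤ Ideal.jacobson ⊥) (g : GL n R)
    (hg : ((g : Matrix n n R).map (Ideal.Quotient.mk I)).BlockTriangular b) :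
    ∃ k p : GL n R, k ∈ (map (Ideal.Quotient.mk I)).ker ∧
      (p : Matrix n n R).BlockTriangular b ∧ g = k * p := by
  classical
  let P : Matrix n n R := of fun i j => if b j < b i then 0 else g i j
  have hPg : P.map (Ideal.Quotient.mk I) = (g : Matrix n n R).map (Ideal.Quotient.mk I) := by
    ext i j
    by_cases hij : b j < b i
    · simpa [P, hij] using (hg hij).symm
    · simp [P, hij]
  have hP : IsUnit P.det := by
    have := isLocalHom_of_le_jacobson_bot I hI
    rw [← isUnit_map_iff (Ideal.Quotient.mk I), RingHom.map_det, RingHom.mapMatrix_apply, hPg,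
      ← RingHom.mapMatrix_apply, ← RingHom.map_det]
    exact g.isUnit.map detMonoidHom |>.map _
  let p : GL n R := nonsingInvUnit P hP
  refine ⟨g * p⁻¹, p, ?_, fun i j hij => if_pos hij, (inv_mul_cancel_right g p).symm⟩
  rw [MonoidHom.mem_ker, _root_.map_mul, _root_.map_inv, mul_inv_eq_one]
  exact Units.ext hPg.symm

end GeneralLinearGroup

end Matrix

theorem stmt4_general {O : Type*} [CommRing O] [IsDomain O] [IsDiscreteValuationRing O]
    (ϖ : O) (hϖ : Irreducible ϖ) (d m h : ℕ) (hm : 1 ≤ m) (hh : h ≤ d)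
    (g : GL (Fin d) O) :
    Submodule.map
        (Matrix.mulVecLin
          ((g : Matrix (Fin d) (Fin d) O).map (Ideal.Quotient.mk (Ideal.span {ϖ ^ m}))))
        (Submodule.span (O ⧸ Ideal.span {ϖ ^ m})
          (Set.range fun i : Fin h => Pi.single (Fin.castLE hh i) 1)) =
      Submodule.span (O ⧸ Ideal.span {ϖ ^ m})
        (Set.range fun i : Fin h => Pi.single (Fin.castLE hh i) 1) ↔
    ∃ k p : GL (Fin d) O,
      -- `k ∈ K_m`, the kernel of the reduction map `GL_d(O) → GL_d(O/ϖ^m O)`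
      k ∈ (Matrix.GeneralLinearGroup.map (Ideal.Quotient.mk (Ideal.span {ϖ ^ m}))).ker ∧
      -- `p ∈ P_h(O)`: the lower-left `(d-h) × h` block of `p` vanishes
      (∀ i j : Fin d, h ≤ (i : ℕ) → (j : ℕ) < h → (p : Matrix (Fin d) (Fin d) O) i j = 0) ∧
      g = k * p := by
  set φ := Ideal.Quotient.mk (Ideal.span {ϖ ^ m})
  have hI : Ideal.span {ϖ ^ m} ≤ Ideal.jacobson ⊥ := by
    rw [IsLocalRing.jacobson_eq_maximalIdeal ⊥ bot_ne_top]
    refine IsLocalRing.le_maximalIdeal fun htop => hϖ.not_isUnit ?_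
    exact (isUnit_pow_iff (by omega)).mp (Ideal.span_singleton_eq_top.mp htop)
  have hg : IsUnit ((g : Matrix (Fin d) (Fin d) O).map φ) := (GeneralLinearGroup.map φ g).isUnit
  simp_rw [range_single_castLE_eq_basisFun_image hh, map_mulVecLin_span_eq_iff_blockTriangular hg,
    ← blockTriangular_le_val_iff]
  constructor
  · exact GeneralLinearGroup.exists_mem_ker_map_mul_blockTriangular hI g
  · rintro ⟨k, p, hk, hp, rfl⟩
    have hkp : ((k * p : GL (Fin d) O) : Matrix (Fin d) (Fin d) O).map φ =
        (p : Matrix (Fin d) (Fin d) O).map φ :=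
      congrArg Units.val (show GeneralLinearGroup.map φ (k * p) = GeneralLinearGroup.map φ p by
        rw [map_mul, MonoidHom.mem_ker.mp hk, one_mul])
    exact hkp ▸ hp.map φ

theorem stmt4 {O : Type*} [CommRing O] [IsDomain O] [IsDiscreteValuationRing O]
    (ϖ : O) (hϖ : Irreducible ϖ) (d m h : ℕ) (hd : 1 ≤ d) (hm : 1 ≤ m) (hh : h ≤ d)
    (g : GL (Fin d) O) :
    Submodule.map
        (Matrix.mulVecLin
          ((g : Matrix (Fin d) (Fin d) O).map (Ideal.Quotient.mk (Ideal.span {ϖ ^ m}))))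
        (Submodule.span (O ⧸ Ideal.span {ϖ ^ m})
          (Set.range fun i : Fin h => Pi.single (Fin.castLE hh i) 1)) =
      Submodule.span (O ⧸ Ideal.span {ϖ ^ m})
        (Set.range fun i : Fin h => Pi.single (Fin.castLE hh i) 1) ↔
    ∃ k p : GL (Fin d) O,
      -- `k ∈ K_m`, the kernel of the reduction map `GL_d(O) → GL_d(O/ϖ^m O)`
      k ∈ (Matrix.GeneralLinearGroup.map (Ideal.Quotient.mk (Ideal.span {ϖ ^ m}))).ker ∧
      -- `p ∈ P_h(O)`: the lower-left `(d-h) × h` block of `p` vanishes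
      (∀ i j : Fin d, h ≤ (i : ℕ) → (j : ℕ) < h → (p : Matrix (Fin d) (Fin d) O) i j = 0) ∧
      g = k * p :=
  stmt4_general ϖ hϖ d m h hm hh g
end

section
/- The map GL_d(O) → S_{m,h}, g ↦ g·J^0_{m,h} (where g acts on (O/ϖ^m O)^d via reduction of entries modulo ϖ^m), induces a bijection from the double coset space K_m\GL_d(O)/P_h(O) onto S_{m,h}. -/
/-!
Reduction modulo `ϖ ^ m` maps `GL_d(O)` onto `GL_d(O/ϖ^m)` with kernel `K_m`, and maps `P_h(O)`
onto the block upper triangular group `P_h(O/ϖ^m)`: since `O` is local, a matrix whose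
reduction is invertible is itself invertible, so a lift with vanishing lower-left block can be
chosen. That group is exactly the stabiliser of `J⁰`, so `K_m \ GL_d(O) / P_h(O)` is identified
with the orbit of `J⁰` under `GL_d(O/ϖ^m)`. Over the local ring `O/ϖ^m` a complement of a
direct summand is finitely generated projective, hence free, so a basis of a summand `J` and a
basis of a complement form a basis of `(O/ϖ^m)^d`; the matrix with these columns moves `J⁰`
onto `J`, so the orbit is all of `S_{m,h}`.
-/

theorem DoubleCoset.setoid_ker_iff {G H : Type*} [Group G] [Group H] (φ : G →* H)
    (P : Subgroup G) {a b : G} :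
    DoubleCoset.setoid (φ.ker : Set G) P a b ↔ φ (a⁻¹ * b) ∈ P.map φ := by
  rw [DoubleCoset.rel_iff]
  constructor
  · rintro ⟨k, hk, p, hp, rfl⟩
    refine ⟨p, hp, ?_⟩
    simp [φ.mem_ker.1 hk]
  · rintro ⟨p, hp, hφ⟩
    refine ⟨a * (a⁻¹ * b * p⁻¹) * a⁻¹, φ.normal_ker.conj_mem _ ?_ a, p, hp, by group⟩
    rw [φ.mem_ker, map_mul, map_inv, hφ, mul_inv_cancel]

namespace Matrix

variable {n R : Type*} [CommRing R]

theorem blockTriangular_notMem_iff {s : Set n} {M : Matrix n n R} :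
    M.BlockTriangular (· ∉ s) ↔ ∀ i j, i ∉ s → j ∈ s → M i j = 0 := by
  simp only [BlockTriangular, lt_iff_le_not_ge, le_Prop_eq, Classical.not_imp, not_not]
  exact ⟨fun hM i j hi hj => hM ⟨fun _ => hi, hi, hj⟩, fun hM i j hij => hM i j hij.2.1 hij.2.2⟩

variable [Fintype n]

variable (R) in
def coordSubmodule (s : Set n) : Submodule R (n → R) :=
  Submodule.span R (Pi.basisFun R n '' s)

theorem mem_coordSubmodule {s : Set n} {v : n → R} :
    v ∈ coordSubmodule R s ↔ ∀ i ∉ s, v i = 0 := by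
  rw [coordSubmodule, Module.Basis.mem_span_image]
  simp only [Set.subset_def, Finset.mem_coe, Finsupp.mem_support_iff, Pi.basisFun_repr]
  exact forall_congr' fun i => not_imp_comm

theorem isCompl_coordSubmodule (s : Set n) :
    IsCompl (coordSubmodule R s) (coordSubmodule R sᶜ) :=
  (Pi.basisFun R n).linearIndependent.isCompl_span_image (Pi.basisFun R n).span_eq isCompl_compl

variable (R) in
noncomputable def coordSubmoduleBasis (s : Set n) : Module.Basis s R (coordSubmodule R s) :=
  (Module.Basis.span ((Pi.basisFun R n).linearIndependent.comp _ Subtype.val_injective)).map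
    (LinearEquiv.ofEq _ _ (by rw [coordSubmodule, Set.range_comp, Subtype.range_coe]))

theorem coordSubmodule_range_castLE {d h : ℕ} (hh : h ≤ d) :
    coordSubmodule R (Set.range (Fin.castLE hh)) =
      Submodule.span R (Set.range fun i : Fin h => Pi.single (Fin.castLE hh i) 1) := by
  simp only [coordSubmodule, ← Set.range_comp, Function.comp_def, Pi.basisFun_apply]

theorem map_mulVecLin_coordSubmodule_le_iff [DecidableEq n] {s : Set n} {M : Matrix n n R} :
    (coordSubmodule R s).map M.mulVecLin ≤ coordSubmodule R s ↔ M.BlockTriangular (· ∉ s) := by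
  rw [blockTriangular_notMem_iff, Submodule.map_le_iff_le_comap, coordSubmodule,
    Submodule.span_le]
  constructor
  · rintro hM i j hi hj
    simpa [mulVec_single_one] using mem_coordSubmodule.1 (hM ⟨j, hj, rfl⟩) i hi
  · rintro hM _ ⟨j, hj, rfl⟩
    refine mem_coordSubmodule.2 fun i hi => ?_
    simpa [mulVec_single_one] using hM i j hi hj

end Matrix

namespace Matrix.GeneralLinearGroup

variable {n R : Type*} [Fintype n] [DecidableEq n] [CommRing R]

variable (R) in
def blockTriangularSubgroup {α : Type*} [LinearOrder α] (b : n → α) : Subgroup (GL n R) where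
  carrier := {u | (u : Matrix n n R).BlockTriangular b}
  one_mem' := blockTriangular_one
  mul_mem' := BlockTriangular.mul
  inv_mem' {u} hu := by
    let := u.invertible
    simpa [coe_inv] using blockTriangular_inv_of_blockTriangular hu

theorem mem_blockTriangularSubgroup {α : Type*} [LinearOrder α] {b : n → α} {u : GL n R} :
    u ∈ blockTriangularSubgroup R b ↔ (u : Matrix n n R).BlockTriangular b := Iff.rfl

theorem coe_blockTriangularSubgroup_range_castLE {d h : ℕ} (hh : h ≤ d) :
    (blockTriangularSubgroup R (· ∉ Set.range (Fin.castLE hh)) : Set (GL (Fin d) R)) =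
      {p : GL (Fin d) R |
        ∀ i j : Fin d, h ≤ (i : ℕ) → (j : ℕ) < h → (p : Matrix (Fin d) (Fin d) R) i j = 0} := by
  ext p
  rw [Set.mem_ofPred_eq, SetLike.mem_coe, mem_blockTriangularSubgroup, blockTriangular_notMem_iff]
  simp only [Fin.range_castLE, Set.mem_ofPred_eq, not_lt]

def toLinearEquiv (u : GL n R) : (n → R) ≃ₗ[R] (n → R) :=
  LinearMap.GeneralLinearGroup.toLinearEquiv (toLin u)

theorem coe_toLinearEquiv (u : GL n R) :
    (toLinearEquiv u : (n → R) →ₗ[R] (n → R)) = (u : Matrix n n R).mulVecLin := rfl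

theorem map_mulVecLin_injective (u : GL n R) :
    Function.Injective (Submodule.map (u : Matrix n n R).mulVecLin) := by
  rw [← coe_toLinearEquiv]
  exact Submodule.map_injective_of_injective (toLinearEquiv u).injective

theorem map_mulVecLin_eq_map_mulVecLin_iff {u v : GL n R} {J : Submodule R (n → R)} :
    J.map (u : Matrix n n R).mulVecLin = J.map (v : Matrix n n R).mulVecLin ↔
      J.map ((u⁻¹ * v : GL n R) : Matrix n n R).mulVecLin = J := by
  conv_rhs => rw [← (map_mulVecLin_injective u).eq_iff, ← Submodule.map_comp, ← mulVecLin_mul,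
    ← coe_mul, mul_inv_cancel_left]
  exact eq_comm

theorem map_mulVecLin_coordSubmodule_eq_iff {s : Set n} {u : GL n R} :
    (coordSubmodule R s).map (u : Matrix n n R).mulVecLin = coordSubmodule R s ↔
      u ∈ blockTriangularSubgroup R (· ∉ s) := by
  refine ⟨fun hu => map_mulVecLin_coordSubmodule_le_iff.1 hu.le, fun hu => le_antisymm
    (map_mulVecLin_coordSubmodule_le_iff.2 hu) fun v hv => ⟨_,
      map_mulVecLin_coordSubmodule_le_iff.2 (inv_mem hu) ⟨v, hv, rfl⟩, ?_⟩⟩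
  simp only [mulVecLin_apply, mulVec_mulVec, ← Units.val_mul, mul_inv_cancel, Units.val_one,
    one_mulVec]

theorem map_blockTriangularSubgroup {A : Type*} [CommRing A] (f : A →+* R) [IsLocalHom f]
    (hf : Function.Surjective f) {α : Type*} [LinearOrder α] (b : n → α) :
    (blockTriangularSubgroup A b).map (map f) = blockTriangularSubgroup R b := by
  classical
  ext q
  constructor
  · rintro ⟨p, hp, rfl⟩
    exact hp.map f
  · intro hq
    let M : Matrix n n A := of fun i j => if b j < b i then 0 else Function.surjInv hf (q i j)
    have hM : M.map f = q := by
      ext i j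
      by_cases hij : b j < b i
      · simp [M, hij, hq hij]
      · simp [M, hij, Function.surjInv_eq]
    have hMu : IsUnit M := by
      rw [isUnit_iff_isUnit_det]
      refine IsUnit.of_map f _ ?_
      rw [RingHom.map_det, RingHom.mapMatrix_apply, hM]
      exact q.isUnit.map detMonoidHom
    refine ⟨hMu.unit, fun i j hij => if_pos hij, Units.ext ?_⟩
    simpa using hM

theorem map_surjective_of_isLocalHom {A : Type*} [CommRing A] (f : A →+* R) [IsLocalHom f]
    (hf : Function.Surjective f) : Function.Surjective (map (n := n) f) := fun q => by
  -- every matrix is block triangular for a constant block map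
  obtain ⟨p, -, hp⟩ := (map_blockTriangularSubgroup f hf fun _ : n => ()).ge
    (show (q : Matrix n n R).BlockTriangular fun _ => () from fun _ _ h => (lt_irrefl _ h).elim)
  exact ⟨p, hp⟩

theorem isCompl_and_basis_of_map_coordSubmodule (s : Set n) (u : GL n R) :
    (∃ N, IsCompl ((coordSubmodule R s).map (u : Matrix n n R).mulVecLin) N) ∧
      Nonempty (Module.Basis s R ((coordSubmodule R s).map (u : Matrix n n R).mulVecLin)) := by
  rw [← coe_toLinearEquiv]
  exact ⟨⟨_, (Submodule.orderIsoMapComap (toLinearEquiv u)).isCompl (isCompl_coordSubmodule s)⟩,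
    ⟨(coordSubmoduleBasis R s).map ((toLinearEquiv u).submoduleMap _)⟩⟩

theorem exists_map_mulVecLin_coordSubmodule_eq [IsLocalRing R] {s : Set n}
    {J N : Submodule R (n → R)} (hJN : IsCompl J N) (bJ : Module.Basis s R J) :
    ∃ u : GL n R, (coordSubmodule R s).map (u : Matrix n n R).mulVecLin = J := by
  classical
  have hNJ := hJN.symm
  have : Module.Projective R N :=
    .of_split N.subtype (N.projectionOnto J hNJ) (N.projectionOnto_comp_subtype hNJ)
  have : Module.Finite R N := .of_surjective _ (N.projectionOnto_surjective hNJ)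
  have : Module.Free R N := Module.free_of_flat_of_isLocalRing
  let B₀ := (bJ.prod (Module.Free.chooseBasis R N)).map (Submodule.prodEquivOfIsCompl J N hJN)
  have hcard : Fintype.card (Module.Free.ChooseBasisIndex R N) = Fintype.card (sᶜ : Set n) := by
    have := Fintype.card_congr (B₀.indexEquiv (Pi.basisFun R n))
    rw [Fintype.card_sum] at this
    rw [Fintype.card_compl_set]
    omega
  let B := (B₀.reindex ((Equiv.refl s).sumCongr (Fintype.equivOfCardEq hcard))).reindex
    (Equiv.Set.sumCompl s)
  have hB (i : s) : B i = bJ i := by simp [B, B₀]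
  let u : GL n R := @unitOfInvertible _ _ _ ((Pi.basisFun R n).invertibleToMatrix B)
  have hu (i : n) : (u : Matrix n n R).mulVecLin (Pi.basisFun R n i) = B i := by
    ext j
    simp [u, Module.Basis.toMatrix_apply]
  refine ⟨u, ?_⟩
  rw [coordSubmodule, Submodule.map_span, ← Set.image_comp, Set.image_eq_range]
  simp only [Function.comp_apply, hu, hB]
  rw [show (fun i => (bJ i : n → R)) = J.subtype ∘ bJ from rfl, Set.range_comp,
    Submodule.span_image, bJ.span_eq, Submodule.map_subtype_top]

theorem exists_injective_doubleCoset_map_coordSubmodule {O : Type*} [CommRing O] [IsLocalRing O]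
    [Nontrivial R] (π : O →+* R) (hπ : Function.Surjective π) (s : Set n) :
    ∃ f : DoubleCoset.Quotient ((map (n := n) π).ker : Set (GL n O))
        (blockTriangularSubgroup O (· ∉ s)) → Submodule R (n → R),
      (∀ g : GL n O, f (Quotient.mk _ g) =
        (coordSubmodule R s).map ((g : Matrix n n O).map π).mulVecLin) ∧
      Function.Injective f ∧
      Set.range f =
        {J : Submodule R (n → R) | (∃ N, IsCompl J N) ∧ Nonempty (Module.Basis s R J)} := by
  have := IsLocalHom.of_surjective π hπ
  have := IsLocalRing.of_surjective π hπ
  let F (g : GL n O) := (coordSubmodule R s).map (map π g : Matrix n n R).mulVecLin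
  have hF (g g' : GL n O) :
      F g = F g' ↔ DoubleCoset.setoid ((map (n := n) π).ker : Set (GL n O))
        (blockTriangularSubgroup O (· ∉ s)) g g' := by
    rw [DoubleCoset.setoid_ker_iff, map_blockTriangularSubgroup π hπ,
      ← map_mulVecLin_coordSubmodule_eq_iff, map_mul, map_inv]
    exact map_mulVecLin_eq_map_mulVecLin_iff
  refine ⟨Quotient.lift F fun g g' h => (hF g g').2 h, fun g => rfl, ?_, ?_⟩
  · rintro ⟨g⟩ ⟨g'⟩ h
    exact Quotient.sound ((hF g g').1 h)
  · let G (u : GL n R) := (coordSubmodule R s).map (u : Matrix n n R).mulVecLin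
    calc Set.range _ = Set.range F := (Quotient.mk_surjective.range_comp _).symm
      _ = Set.range G := (map_surjective_of_isLocalHom π hπ).range_comp G
      _ = _ := Set.ext fun J =>
        ⟨by rintro ⟨u, rfl⟩; exact isCompl_and_basis_of_map_coordSubmodule s u,
          by rintro ⟨⟨_, hJN⟩, ⟨bJ⟩⟩; exact exists_map_mulVecLin_coordSubmodule_eq hJN bJ⟩

end Matrix.GeneralLinearGroup

theorem stmt5_general {O : Type*} [CommRing O] [IsDomain O] [IsDiscreteValuationRing O]
    (ϖ : O) (hϖ : Irreducible ϖ) (d m h : ℕ) (hm : 1 ≤ m) (hh : h ≤ d) :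
    letI R := O ⧸ Ideal.span {ϖ ^ m}
    -- `K_m`, the kernel of the reduction map `GL_d(O) → GL_d(O/ϖ^m O)`
    letI Km : Set (GL (Fin d) O) :=
      ((Matrix.GeneralLinearGroup.map (n := Fin d) (Ideal.Quotient.mk (Ideal.span {ϖ ^ m}))).ker : Set (GL (Fin d) O))
    -- `P_h(O)`: matrices whose lower-left `(d-h) × h` block vanishes
    letI Ph : Set (GL (Fin d) O) :=
      {p | ∀ i j : Fin d, h ≤ (i : ℕ) → (j : ℕ) < h → (p : Matrix (Fin d) (Fin d) O) i j = 0}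
    -- `J⁰_{m,h}`, the span of the first `h` standard basis vectors
    letI J0 : Submodule R (Fin d → R) :=
      Submodule.span R (Set.range fun i : Fin h => Pi.single (Fin.castLE hh i) 1)
    ∃ f : DoubleCoset.Quotient Km Ph → Submodule R (Fin d → R),
      (∀ g : GL (Fin d) O,
        f (Quotient.mk (DoubleCoset.setoid Km Ph) g) =
          Submodule.map
            (Matrix.mulVecLin
              ((g : Matrix (Fin d) (Fin d) O).map (Ideal.Quotient.mk (Ideal.span {ϖ ^ m}))))
            J0) ∧
      Function.Injective f ∧
      Set.range f = {J : Submodule R (Fin d → R) | (∃ N, IsCompl J N) ∧ Nonempty (Module.Basis (Fin h) R J)} := by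
  open Matrix GeneralLinearGroup in
  have hI : Ideal.span {ϖ ^ m} ≠ ⊤ := by
    rw [Ne, Ideal.span_singleton_eq_top, isUnit_pow_iff (by omega)]
    exact hϖ.not_isUnit
  have := Ideal.Quotient.nontrivial_iff.2 hI
  rw [← coordSubmodule_range_castLE, ← coe_blockTriangularSubgroup_range_castLE hh]
  obtain ⟨f, hf, hinj, hrange⟩ := exists_injective_doubleCoset_map_coordSubmodule
    (Ideal.Quotient.mk (Ideal.span {ϖ ^ m})) Ideal.Quotient.mk_surjective (Set.range (Fin.castLE hh))
  refine ⟨f, hf, hinj, hrange.trans ?_⟩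
  let e := Equiv.ofInjective _ (Fin.castLE_injective hh)
  exact Set.ext fun J => and_congr_right fun _ =>
    ⟨fun ⟨b⟩ => ⟨b.reindex e.symm⟩, fun ⟨b⟩ => ⟨b.reindex e⟩⟩

theorem stmt5 {O : Type*} [CommRing O] [IsDomain O] [IsDiscreteValuationRing O]
    (ϖ : O) (hϖ : Irreducible ϖ) (d m h : ℕ) (hd : 1 ≤ d) (hm : 1 ≤ m) (hh : h ≤ d) :
    letI R := O ⧸ Ideal.span {ϖ ^ m}
    -- `K_m`, the kernel of the reduction map `GL_d(O) → GL_d(O/ϖ^m O)`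
    letI Km : Set (GL (Fin d) O) :=
      ((Matrix.GeneralLinearGroup.map (n := Fin d) (Ideal.Quotient.mk (Ideal.span {ϖ ^ m}))).ker : Set (GL (Fin d) O))
    -- `P_h(O)`: matrices whose lower-left `(d-h) × h` block vanishes
    letI Ph : Set (GL (Fin d) O) :=
      {p | ∀ i j : Fin d, h ≤ (i : ℕ) → (j : ℕ) < h → (p : Matrix (Fin d) (Fin d) O) i j = 0}
    -- `J⁰_{m,h}`, the span of the first `h` standard basis vectors
    letI J0 : Submodule R (Fin d → R) :=
      Submodule.span R (Set.range fun i : Fin h => Pi.single (Fin.castLE hh i) 1)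
    ∃ f : DoubleCoset.Quotient Km Ph → Submodule R (Fin d → R),
      (∀ g : GL (Fin d) O,
        f (Quotient.mk (DoubleCoset.setoid Km Ph) g) =
          Submodule.map
            (Matrix.mulVecLin
              ((g : Matrix (Fin d) (Fin d) O).map (Ideal.Quotient.mk (Ideal.span {ϖ ^ m}))))
            J0) ∧
      Function.Injective f ∧
      Set.range f = {J : Submodule R (Fin d → R) | (∃ N, IsCompl J N) ∧ Nonempty (Module.Basis (Fin h) R J)} :=
  stmt5_general ϖ hϖ d m h hm hh
end

section
/- The inclusion GL_d(O) ⊆ GL_d(F) induces a bijection of double coset spaces K_m\GL_d(O)/P_h(O) → K_m\GL_d(F)/P_h(F). -/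
/-!
If `ι(k x) p = ι(y)` with `k, x, y ∈ GL_d(O)` and `p ∈ P_h(F)`, then `p = ι((k x)⁻¹ y)`
has entries in `O`, so it comes from `P_h(O)`; this is injectivity. Surjectivity is the decomposition
`GL_d(F) = GL_d(O) P_h(F)`: the span `W` of the first `h` columns of `g ∈ GL_d(F)` meets `O^d` in
a saturated lattice, so by the Smith normal form some `n ≤ h` vectors of a basis of `O^d` span
`W`. Putting them first gives `u ∈ GL_d(O)` whose first `h` columns span a space containing `W`,
i.e. `u⁻¹ g ∈ P_h(F)`.
-/

open Matrix

namespace DoubleCoset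

variable {G G' : Type*} [Group G] [Group G'] (φ : G →* G') (K P : Subgroup G) (P' : Subgroup G')

def map (hP : P ≤ P'.comap φ) : Quotient (K : Set G) P → Quotient (φ '' K) P' :=
  _root_.Quotient.map' φ fun a b hab => by
    obtain ⟨k, hk, p, hp, rfl⟩ := rel_iff.mp hab
    exact rel_iff (H := K.map φ).mpr
      ⟨φ k, K.mem_map_of_mem φ hk, φ p, hP hp, by simp only [map_mul]⟩

variable {φ K P P'}

theorem map_injective (hP : P = P'.comap φ) : Function.Injective (map φ K P P' hP.le) := by
  rintro ⟨a⟩ ⟨b⟩ hab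
  obtain ⟨_, ⟨k, hk, rfl⟩, p', hp', hb⟩ := rel_iff (H := K.map φ).mp (Quotient.exact hab)
  have hp'_eq : p' = φ ((k * a)⁻¹ * b) := by
    rw [map_mul, map_inv, map_mul, hb]
    group
  refine Quotient.sound (rel_iff.mpr ⟨k, hk, (k * a)⁻¹ * b, ?_, by group⟩)
  rw [hP, Subgroup.mem_comap, ← hp'_eq]
  exact hp'

theorem map_surjective (hP : P ≤ P'.comap φ)
    (hdecomp : ∀ g' : G', ∃ g : G, (φ g)⁻¹ * g' ∈ P') :
    Function.Surjective (map φ K P P' hP) := by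
  rintro ⟨g'⟩
  obtain ⟨g, hg⟩ := hdecomp g'
  exact ⟨⟦g⟧,
    Quotient.sound (rel_iff (H := K.map φ).mpr ⟨1, one_mem _, _, hg, by group⟩)⟩

end DoubleCoset

section Lattice

variable {O F : Type*} [CommRing O] [IsDomain O] [Field F] [Algebra O F] [IsFractionRing O F]
  {ι : Type*}

theorem IsFractionRing.exists_smul_eq_comp [Finite ι] (w : ι → F) :
    ∃ β : O, β ≠ 0 ∧ ∃ v : ι → O, algebraMap O F β • w = algebraMap O F ∘ v := by
  obtain ⟨β, hβ⟩ := IsLocalization.exist_integer_multiples_of_finite (nonZeroDivisors O) w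
  choose v hv using hβ
  refine ⟨β, nonZeroDivisors.ne_zero β.2, v, funext fun i => ?_⟩
  rw [Function.comp_apply, hv i, Pi.smul_apply, smul_eq_mul, Algebra.smul_def]

theorem Submodule.exists_basis_span_eq [IsPrincipalIdealRing O] [Fintype ι]
    (W : Submodule F (ι → F)) :
    ∃ (n : ℕ) (b : Module.Basis ι O (ι → O)) (f : Fin n ↪ ι),
      W = span F (Set.range fun k => algebraMap O F ∘ b (f k)) := by
  let φ := (Algebra.linearMap O F).compLeft ι
  let L := (W.restrictScalars O).comap φ
  obtain ⟨n, snf⟩ := L.smithNormalForm (Pi.basisFun O ι)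
  set S := span F (Set.range fun k => algebraMap O F ∘ snf.bM (snf.f k))
  have hφ : ∀ k,
      φ (snf.bN k) = algebraMap O F (snf.a k) • (algebraMap O F ∘ snf.bM (snf.f k)) :=
    fun k => by rw [snf.snf, map_smul, ← algebraMap_smul F]; rfl
  have ha : ∀ k, algebraMap O F (snf.a k) ≠ 0 := fun k hk => snf.bN.ne_zero k <| by
    rw [IsFractionRing.to_map_eq_zero_iff] at hk
    exact Subtype.ext (by rw [snf.snf, hk, zero_smul]; rfl)
  have hLS : L ≤ (S.restrictScalars O).comap φ := by
    rw [← Submodule.map_subtype_top L, ← snf.bN.span_eq, Submodule.map_span, span_le]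
    rintro _ ⟨_, ⟨k, rfl⟩, rfl⟩
    change φ (snf.bN k) ∈ S
    rw [hφ k]
    exact S.smul_mem _ (subset_span ⟨k, rfl⟩)
  refine ⟨n, snf.bM, snf.f, le_antisymm (fun w hw => ?_) ?_⟩
  · obtain ⟨β, hβ, v, hv⟩ := IsFractionRing.exists_smul_eq_comp (O := O) w
    rw [← S.smul_mem_iff ((map_ne_zero_iff _ (IsFractionRing.injective O F)).mpr hβ), hv]
    refine hLS (show algebraMap O F ∘ v ∈ W from ?_)
    exact hv ▸ W.smul_mem _ hw
  · rw [span_le]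
    rintro _ ⟨k, rfl⟩
    rw [SetLike.mem_coe, ← W.smul_mem_iff (ha k), ← hφ]
    exact (snf.bN k).2

end Lattice

theorem Module.Basis.exists_col_eq {R ι : Type*} [CommRing R] [Fintype ι] [DecidableEq ι]
    (b : Module.Basis ι R (ι → R)) :
    ∃ u : GL ι R, ∀ j, (u : Matrix ι ι R).col j = b j := by
  let := (Pi.basisFun R ι).invertibleToMatrix b
  exact ⟨unitOfInvertible ((Pi.basisFun R ι).toMatrix b), fun j => funext fun i => by
    simp [Module.Basis.toMatrix_apply]⟩

namespace Matrix.GeneralLinearGroup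

theorem blockTriangular_decide_le_iff {R : Type*} [CommRing R] {d : ℕ} (h : ℕ)
    {M : Matrix (Fin d) (Fin d) R} :
    M.BlockTriangular (fun i => decide (h ≤ (i : ℕ))) ↔
      ∀ i j : Fin d, h ≤ (i : ℕ) → (j : ℕ) < h → M i j = 0 := by
  refine ⟨fun hM i j hi hj => hM ?_, fun hM i j hij => ?_⟩
  · simpa [Bool.lt_iff] using ⟨hj, hi⟩
  · simp only [Bool.lt_iff, decide_eq_false_iff_not, decide_eq_true_eq, not_le] at hij
    exact hM i j hij.2 hij.1

/-- `P_h(R)`, the stabilizer of the span of the first `h` standard basis vectors. -/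
def parabolic (R : Type*) [CommRing R] (d h : ℕ) : Subgroup (GL (Fin d) R) where
  carrier := {p | ∀ i j : Fin d, h ≤ (i : ℕ) → (j : ℕ) < h →
    (p : Matrix (Fin d) (Fin d) R) i j = 0}
  one_mem' := (blockTriangular_decide_le_iff h).mp blockTriangular_one
  mul_mem' ha hb := (blockTriangular_decide_le_iff h).mp
    (((blockTriangular_decide_le_iff h).mpr ha).mul ((blockTriangular_decide_le_iff h).mpr hb))
  inv_mem' hp := by
    rw [Set.mem_ofPred_eq, coe_units_inv, ← blockTriangular_decide_le_iff]
    exact blockTriangular_inv_of_blockTriangular ((blockTriangular_decide_le_iff h).mpr hp)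

theorem comap_map_parabolic {R S : Type*} [CommRing R] [CommRing S] {f : R →+* S}
    (hf : Function.Injective f) (d h : ℕ) :
    (parabolic S d h).comap (map f) = parabolic R d h := by
  ext p
  exact forall₄_congr fun i j _ _ => map_eq_zero_iff f hf

theorem inv_mul_mem_parabolic {R : Type*} [CommRing R] {d h : ℕ} {A g : GL (Fin d) R}
    (hg : ∀ j : Fin d, (j : ℕ) < h → (g : Matrix (Fin d) (Fin d) R).col j ∈
      Submodule.span R (Set.range fun j' : {j' : Fin d // (j' : ℕ) < h} =>
        (A : Matrix (Fin d) (Fin d) R).col j')) :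
    A⁻¹ * g ∈ parabolic R d h := by
  intro i j hi hj
  let ψ := (LinearMap.proj i).comp (mulVecLin (A⁻¹ : GL (Fin d) R).val)
  have hspan : Submodule.span R (Set.range fun j' : {j' : Fin d // (j' : ℕ) < h} =>
      (A : Matrix (Fin d) (Fin d) R).col j') ≤ LinearMap.ker ψ := by
    rw [Submodule.span_le]
    rintro _ ⟨⟨j', hj'⟩, rfl⟩
    have hij : i ≠ j' := Fin.ne_of_val_ne (by omega)
    change (((A⁻¹ : GL (Fin d) R) : Matrix (Fin d) (Fin d) R) *ᵥ
      (A : Matrix (Fin d) (Fin d) R).col j') i = 0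
    rw [← mulVec_single_one, mulVec_mulVec, ← Units.val_mul, inv_mul_cancel, Units.val_one,
      one_mulVec]
    exact Pi.single_eq_of_ne hij 1
  have hcol := hspan (hg j hj)
  rwa [LinearMap.mem_ker, LinearMap.comp_apply, mulVecLin_apply, ← mulVec_single_one,
    mulVec_mulVec, mulVec_single_one] at hcol

theorem exists_inv_mul_mem_parabolic {O F : Type*} [CommRing O] [IsDomain O]
    [IsPrincipalIdealRing O] [Field F] [Algebra O F] [IsFractionRing O F] {d h : ℕ}
    (g : GL (Fin d) F) :
    ∃ u : GL (Fin d) O, (map (algebraMap O F) u)⁻¹ * g ∈ parabolic F d h := by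
  set W := Submodule.span F (Set.range fun j : {j : Fin d // (j : ℕ) < h} =>
    (g : Matrix (Fin d) (Fin d) F).col j)
  obtain ⟨n, b, f, hW⟩ := W.exists_basis_span_eq (O := O)
  have hnd : n ≤ d := by simpa using Fintype.card_le_of_embedding f
  obtain ⟨σ, hσ⟩ := Equiv.Perm.exists_extending_pair (Fin.castLE hnd) f
    (Fin.castLE_injective hnd) f.injective
  obtain ⟨u, hu⟩ := (b.reindex σ.symm).exists_col_eq
  set A := ((map (algebraMap O F) u : GL (Fin d) F) : Matrix (Fin d) (Fin d) F)
  have hA : ∀ k, A.col (Fin.castLE hnd k) = algebraMap O F ∘ b (f k) := fun k => by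
    change algebraMap O F ∘ (u : Matrix (Fin d) (Fin d) O).col _ = _
    rw [hu, b.reindex_apply, Equiv.symm_symm, hσ]
  have hWA : W = Submodule.span F (Set.range fun k => A.col (Fin.castLE hnd k)) := by
    simp only [hA, hW]
  have hnh : n ≤ h := calc
    n = Module.finrank F W := by
      have hli : LinearIndependent F fun k => A.col (Fin.castLE hnd k) :=
        (linearIndependent_cols_of_isUnit (map (algebraMap O F) u).isUnit).comp _
          (Fin.castLE_injective hnd)
      rw [hWA, finrank_span_eq_card hli, Fintype.card_fin]
    _ ≤ Fintype.card {j : Fin d // (j : ℕ) < h} := finrank_range_le_card _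
    _ ≤ h := by
      simpa using Fintype.card_le_of_injective (fun j => (⟨j.1, j.2⟩ : Fin h))
        fun j j' hjj' => by simpa [Subtype.ext_iff, Fin.ext_iff] using hjj'
  refine ⟨u, inv_mul_mem_parabolic fun j hj => ?_⟩
  have hgW : (g : Matrix (Fin d) (Fin d) F).col j ∈ W :=
    Submodule.subset_span ⟨⟨j, hj⟩, rfl⟩
  rw [hWA] at hgW
  refine Submodule.span_mono ?_ hgW
  rintro _ ⟨k, rfl⟩
  exact ⟨⟨Fin.castLE hnd k, k.2.trans_le hnh⟩, rfl⟩

end Matrix.GeneralLinearGroup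

open Matrix.GeneralLinearGroup in
theorem stmt7_general {O : Type*} [CommRing O] [IsDomain O] [IsDiscreteValuationRing O]
    {F : Type*} [Field F] [Algebra O F] [IsFractionRing O F]
    (ϖ : O) (d m h : ℕ) :
    -- the inclusion `GL_d(O) → GL_d(F)`
    letI ι : GL (Fin d) O →* GL (Fin d) F := Matrix.GeneralLinearGroup.map (algebraMap O F)
    -- `K_m`, the kernel of the reduction map `GL_d(O) → GL_d(O/ϖ^m O)`
    letI Km : Set (GL (Fin d) O) :=
      ((Matrix.GeneralLinearGroup.map (n := Fin d)
        (Ideal.Quotient.mk (Ideal.span {ϖ ^ m}))).ker : Set (GL (Fin d) O))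
    -- `P_h(O)` and `P_h(F)`: matrices whose lower-left `(d-h) × h` block vanishes
    letI PhO : Set (GL (Fin d) O) :=
      {p | ∀ i j : Fin d, h ≤ (i : ℕ) → (j : ℕ) < h → (p : Matrix (Fin d) (Fin d) O) i j = 0}
    letI PhF : Set (GL (Fin d) F) :=
      {p | ∀ i j : Fin d, h ≤ (i : ℕ) → (j : ℕ) < h → (p : Matrix (Fin d) (Fin d) F) i j = 0}
    ∃ f : DoubleCoset.Quotient Km PhO → DoubleCoset.Quotient (ι '' Km) PhF,
      (∀ g : GL (Fin d) O,
        f (Quotient.mk (DoubleCoset.setoid Km PhO) g) =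
          Quotient.mk (DoubleCoset.setoid (ι '' Km) PhF) (ι g)) ∧
      Function.Bijective f := by
  have hP : parabolic O d h = (parabolic F d h).comap (map (algebraMap O F)) :=
    (comap_map_parabolic (IsFractionRing.injective O F) d h).symm
  exact ⟨DoubleCoset.map _ _ _ _ hP.le, fun _ => rfl, DoubleCoset.map_injective hP,
    DoubleCoset.map_surjective hP.le exists_inv_mul_mem_parabolic⟩

theorem stmt7 {O : Type*} [CommRing O] [IsDomain O] [IsDiscreteValuationRing O]
    {F : Type*} [Field F] [Algebra O F] [IsFractionRing O F]
    (ϖ : O) (hϖ : Irreducible ϖ) (d m h : ℕ) (hd : 1 ≤ d) (hm : 1 ≤ m)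
    (hh1 : 1 ≤ h) (hh2 : h ≤ d - 1) :
    -- the inclusion `GL_d(O) → GL_d(F)`
    letI ι : GL (Fin d) O →* GL (Fin d) F := Matrix.GeneralLinearGroup.map (algebraMap O F)
    -- `K_m`, the kernel of the reduction map `GL_d(O) → GL_d(O/ϖ^m O)`
    letI Km : Set (GL (Fin d) O) :=
      ((Matrix.GeneralLinearGroup.map (n := Fin d)
        (Ideal.Quotient.mk (Ideal.span {ϖ ^ m}))).ker : Set (GL (Fin d) O))
    -- `P_h(O)` and `P_h(F)`: matrices whose lower-left `(d-h) × h` block vanishes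
    letI PhO : Set (GL (Fin d) O) :=
      {p | ∀ i j : Fin d, h ≤ (i : ℕ) → (j : ℕ) < h → (p : Matrix (Fin d) (Fin d) O) i j = 0}
    letI PhF : Set (GL (Fin d) F) :=
      {p | ∀ i j : Fin d, h ≤ (i : ℕ) → (j : ℕ) < h → (p : Matrix (Fin d) (Fin d) F) i j = 0}
    ∃ f : DoubleCoset.Quotient Km PhO → DoubleCoset.Quotient (ι '' Km) PhF,
      (∀ g : GL (Fin d) O,
        f (Quotient.mk (DoubleCoset.setoid Km PhO) g) =
          Quotient.mk (DoubleCoset.setoid (ι '' Km) PhF) (ι g)) ∧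
      Function.Bijective f :=
  stmt7_general ϖ d m h
end

section
/- The inclusion GL_d(F)^0 ⊆ GL_d(F) induces a bijection of double coset spaces K_m\GL_d(F)^0/P_h(F)^0 → K_m\GL_d(F)/P_h(F), where K_m ⊆ GL_d(F)^0 and P_h(F)^0 = P_h(F) ∩ GL_d(F)^0. -/
/-!
Since `K_m ⊆ GL_d(F)⁰`, a relation `b = x a y` with `a, b ∈ GL_d(F)⁰`, `x ∈ K_m`, `y ∈ P_h(F)`
forces `y ∈ GL_d(F)⁰`, so the induced map is injective. It is surjective because right
multiplication by `diag(ϖ^(-r), 1, …, 1) ∈ P_h(F)`, where `r = v(det g)`, moves any `g` into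
`GL_d(F)⁰`.
-/

/-- `GL_d(F)⁰`: the subgroup of `g ∈ GL_d(F)` such that `d` divides the normalized
valuation of `det g`; equivalently, `det g = ϖ^(d·k) · u` for some `k ∈ ℤ` and some
unit `u` of `O`. -/
def GLzero {O : Type*} [CommRing O] [IsDomain O] [IsDiscreteValuationRing O]
    {F : Type*} [Field F] [Algebra O F] [IsFractionRing O F]
    (ϖ : O) (hϖ : Irreducible ϖ) (d : ℕ) : Subgroup (GL (Fin d) F) where
  carrier := {g | ∃ (k : ℤ) (u : Oˣ),
    (g : Matrix (Fin d) (Fin d) F).det =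
      algebraMap O F ϖ ^ ((d : ℤ) * k) * algebraMap O F (u : O)}
  one_mem' := ⟨0, 1, by simp⟩
  mul_mem' := by
    rintro a b ⟨k, u, hk⟩ ⟨l, v, hl⟩
    have hϖ0 : algebraMap O F ϖ ≠ 0 :=
      (map_ne_zero_iff _ (IsFractionRing.injective O F)).mpr hϖ.ne_zero
    refine ⟨k + l, u * v, ?_⟩
    show ((a * b : GL (Fin d) F) : Matrix (Fin d) (Fin d) F).det = _
    rw [Units.val_mul, Matrix.det_mul, hk, hl, mul_add, zpow_add₀ hϖ0, Units.val_mul, map_mul]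
    ring
  inv_mem' := by
    rintro a ⟨k, u, hk⟩
    refine ⟨-k, u⁻¹, ?_⟩
    have h1 : ((a⁻¹ : GL (Fin d) F) : Matrix (Fin d) (Fin d) F).det *
        ((a : GL (Fin d) F) : Matrix (Fin d) (Fin d) F).det = 1 := by
      rw [← Matrix.det_mul, ← Units.val_mul, inv_mul_cancel]
      simp
    have h2 : ((a⁻¹ : GL (Fin d) F) : Matrix (Fin d) (Fin d) F).det =
        (((a : GL (Fin d) F) : Matrix (Fin d) (Fin d) F).det)⁻¹ :=
      eq_inv_of_mul_eq_one_left h1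
    rw [h2, hk, mul_inv, ← zpow_neg, map_units_inv, mul_neg]

namespace DoubleCoset

variable {G : Type*} [Group G] (Z H K : Subgroup G)

def mapSubtype :
    Quotient (H.comap Z.subtype : Set Z) (K.comap Z.subtype) → Quotient (H : Set G) K :=
  Quotient.map' Subtype.val fun a b hab => by
    obtain ⟨x, hx, y, hy, rfl⟩ := rel_iff.mp hab
    exact rel_iff.mpr ⟨x, hx, y, hy, rfl⟩

theorem mapSubtype_mk (g : Z) :
    mapSubtype Z H K (Quotient.mk _ g) = Quotient.mk _ g.1 := rfl

variable {Z H K}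

theorem mapSubtype_injective (hH : H ≤ Z) : Function.Injective (mapSubtype Z H K) := by
  rintro ⟨a⟩ ⟨b⟩ hab
  obtain ⟨x, hx, y, hy, hxy⟩ := rel_iff.mp (Quotient.exact hab)
  have hyZ : y ∈ Z := by
    rw [show y = (x * a)⁻¹ * b by rw [hxy]; group]
    exact Z.mul_mem (Z.inv_mem (Z.mul_mem (hH hx) a.2)) b.2
  exact Quotient.sound (rel_iff.mpr ⟨⟨x, hH hx⟩, hx, ⟨y, hyZ⟩, hy, Subtype.ext hxy⟩)

theorem mapSubtype_surjective (hK : ∀ g : G, ∃ k ∈ K, g * k ∈ Z) :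
    Function.Surjective (mapSubtype Z H K) := by
  rintro ⟨g⟩
  obtain ⟨k, hk, hgk⟩ := hK g
  exact ⟨Quotient.mk _ ⟨g * k, hgk⟩, Quotient.sound
    (rel_iff.mpr ⟨1, H.one_mem, k⁻¹, K.inv_mem hk, by group⟩)⟩

end DoubleCoset

namespace Matrix.GeneralLinearGroup

variable {n R α : Type*} [Fintype n] [DecidableEq n] [CommRing R] [LinearOrder α]

def blockTriangular (b : n → α) : Subgroup (GL n R) where
  carrier := {p | (p : Matrix n n R).BlockTriangular b}
  one_mem' := blockTriangular_one
  mul_mem' := BlockTriangular.mul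
  inv_mem' {p} hp := by
    let := p.invertible
    change BlockTriangular _ b
    rw [coe_units_inv]
    exact blockTriangular_inv_of_blockTriangular hp

theorem coe_blockTriangular_decide_le {d : ℕ} (h : ℕ) :
    ((blockTriangular (R := R) fun i : Fin d => decide (h ≤ (i : ℕ))) : Set (GL (Fin d) R)) =
      {p : GL (Fin d) R |
        ∀ i j : Fin d, h ≤ (i : ℕ) → (j : ℕ) < h → (p : Matrix (Fin d) (Fin d) R) i j = 0} := by
  ext p
  simp [blockTriangular, BlockTriangular, Bool.lt_iff, imp.swap]

theorem exists_mem_blockTriangular_det_eq {K : Type*} [Field K] [Nonempty n] (b : n → α)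
    (c : Kˣ) : ∃ p ∈ blockTriangular (R := K) b, (p : Matrix n n K).det = c := by
  let i₀ : n := Classical.arbitrary n
  have hdet : (diagonal (Function.update 1 i₀ (c : K))).det = c := by
    simp [det_diagonal, Finset.prod_update_of_mem]
  exact ⟨mkOfDetNeZero _ (hdet.symm ▸ c.ne_zero), blockTriangular_diagonal _, hdet⟩

end Matrix.GeneralLinearGroup

section GLzero

open Matrix Matrix.GeneralLinearGroup

variable {O : Type*} [CommRing O] [IsDomain O] [IsDiscreteValuationRing O]
  {F : Type*} [Field F] [Algebra O F] [IsFractionRing O F] {ϖ : O} (hϖ : Irreducible ϖ) {d : ℕ}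

theorem mem_GLzero_of_det_eq_unit {g : GL (Fin d) F} (u : Oˣ)
    (hg : (g : Matrix (Fin d) (Fin d) F).det = algebraMap O F u) : g ∈ GLzero ϖ hϖ d :=
  ⟨0, u, by simp [hg]⟩

theorem map_algebraMap_mem_GLzero (k : GL (Fin d) O) :
    GeneralLinearGroup.map (algebraMap O F) k ∈ GLzero ϖ hϖ d :=
  mem_GLzero_of_det_eq_unit hϖ (GeneralLinearGroup.det k) <| by
    simpa [val_det_apply] using congrArg Units.val (GeneralLinearGroup.map_det (algebraMap O F) k)

theorem exists_mem_blockTriangular_mul_mem_GLzero [NeZero d] {α : Type*} [LinearOrder α]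
    (b : Fin d → α) (g : GL (Fin d) F) : ∃ p ∈ blockTriangular b, g * p ∈ GLzero ϖ hϖ d := by
  have hg : (g : Matrix (Fin d) (Fin d) F).det ≠ 0 := by
    simpa [val_det_apply] using (GeneralLinearGroup.det g).ne_zero
  obtain ⟨r, u, hu⟩ := IsDiscreteValuationRing.exists_units_eq_smul_zpow_of_irreducible hϖ hg
  have hϖr : algebraMap O F ϖ ^ r ≠ 0 := zpow_ne_zero _ (by simpa using hϖ.ne_zero)
  obtain ⟨p, hp, hpdet⟩ := exists_mem_blockTriangular_det_eq b (Units.mk0 _ hϖr)⁻¹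
  refine ⟨p, hp, mem_GLzero_of_det_eq_unit hϖ u ?_⟩
  rw [coe_mul, det_mul, hu, hpdet, Units.val_inv_eq_inv_val, Units.val_mk0, Units.smul_def,
    Algebra.smul_def]
  field_simp

end GLzero

theorem stmt9_general {O : Type*} [CommRing O] [IsDomain O] [IsDiscreteValuationRing O]
    {F : Type*} [Field F] [Algebra O F] [IsFractionRing O F]
    (ϖ : O) (hϖ : Irreducible ϖ) (d m h : ℕ) (hd : 1 ≤ d) :
    -- the inclusion `GL_d(O) → GL_d(F)`
    letI ι : GL (Fin d) O →* GL (Fin d) F := Matrix.GeneralLinearGroup.map (algebraMap O F)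
    -- `K_m` viewed inside `GL_d(F)`
    letI Km : Set (GL (Fin d) F) :=
      ι '' ((Matrix.GeneralLinearGroup.map (n := Fin d)
        (Ideal.Quotient.mk (Ideal.span {ϖ ^ m}))).ker : Set (GL (Fin d) O))
    -- `P_h(F)`: matrices whose lower-left `(d-h) × h` block vanishes
    letI PhF : Set (GL (Fin d) F) :=
      {p | ∀ i j : Fin d, h ≤ (i : ℕ) → (j : ℕ) < h → (p : Matrix (Fin d) (Fin d) F) i j = 0}
    -- `K_m ⊆ GL_d(F)⁰` and `P_h(F)⁰ = P_h(F) ∩ GL_d(F)⁰`, viewed inside `GL_d(F)⁰`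
    letI Km0 : Set (GLzero ϖ hϖ d) := {g | (g : GL (Fin d) F) ∈ Km}
    letI Ph0 : Set (GLzero ϖ hϖ d) := {g | (g : GL (Fin d) F) ∈ PhF}
    ∃ f : DoubleCoset.Quotient Km0 Ph0 → DoubleCoset.Quotient Km PhF,
      (∀ g : GLzero ϖ hϖ d,
        f (Quotient.mk (DoubleCoset.setoid Km0 Ph0) g) =
          Quotient.mk (DoubleCoset.setoid Km PhF) g.1) ∧
      Function.Bijective f := by
  have : NeZero d := ⟨by omega⟩
  let Z := GLzero (F := F) ϖ hϖ d
  let K := Subgroup.map (Matrix.GeneralLinearGroup.map (algebraMap O F))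
    (Matrix.GeneralLinearGroup.map (n := Fin d) (Ideal.Quotient.mk (Ideal.span {ϖ ^ m}))).ker
  let P := Matrix.GeneralLinearGroup.blockTriangular (R := F) fun i : Fin d => decide (h ≤ (i : ℕ))
  have hKZ : K ≤ Z := by
    rintro _ ⟨k, -, rfl⟩
    exact map_algebraMap_mem_GLzero hϖ k
  rw [← Matrix.GeneralLinearGroup.coe_blockTriangular_decide_le h]
  exact ⟨DoubleCoset.mapSubtype Z K P, DoubleCoset.mapSubtype_mk Z K P,
    DoubleCoset.mapSubtype_injective hKZ,
    DoubleCoset.mapSubtype_surjective (exists_mem_blockTriangular_mul_mem_GLzero hϖ _)⟩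

theorem stmt9 {O : Type*} [CommRing O] [IsDomain O] [IsDiscreteValuationRing O]
    {F : Type*} [Field F] [Algebra O F] [IsFractionRing O F]
    (ϖ : O) (hϖ : Irreducible ϖ) (d m h : ℕ) (hd : 1 ≤ d) (hm : 1 ≤ m)
    (hh1 : 1 ≤ h) (hh2 : h ≤ d - 1) :
    -- the inclusion `GL_d(O) → GL_d(F)`
    letI ι : GL (Fin d) O →* GL (Fin d) F := Matrix.GeneralLinearGroup.map (algebraMap O F)
    -- `K_m` viewed inside `GL_d(F)`
    letI Km : Set (GL (Fin d) F) :=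
      ι '' ((Matrix.GeneralLinearGroup.map (n := Fin d)
        (Ideal.Quotient.mk (Ideal.span {ϖ ^ m}))).ker : Set (GL (Fin d) O))
    -- `P_h(F)`: matrices whose lower-left `(d-h) × h` block vanishes
    letI PhF : Set (GL (Fin d) F) :=
      {p | ∀ i j : Fin d, h ≤ (i : ℕ) → (j : ℕ) < h → (p : Matrix (Fin d) (Fin d) F) i j = 0}
    -- `K_m ⊆ GL_d(F)⁰` and `P_h(F)⁰ = P_h(F) ∩ GL_d(F)⁰`, viewed inside `GL_d(F)⁰`
    letI Km0 : Set (GLzero ϖ hϖ d) := {g | (g : GL (Fin d) F) ∈ Km}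
    letI Ph0 : Set (GLzero ϖ hϖ d) := {g | (g : GL (Fin d) F) ∈ PhF}
    ∃ f : DoubleCoset.Quotient Km0 Ph0 → DoubleCoset.Quotient Km PhF,
      (∀ g : GLzero ϖ hϖ d,
        f (Quotient.mk (DoubleCoset.setoid Km0 Ph0) g) =
          Quotient.mk (DoubleCoset.setoid Km PhF) g.1) ∧
      Function.Bijective f :=
  stmt9_general ϖ hϖ d m h hd
end
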